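/- Every model of the LTL encoding of a MIG 𝒢 is a trace for 𝒢. -/
import Mathlib


/-- Links of a Molecular Interaction Graph: non-consuming productions `P ⇝ Q`,
consuming productions `P ⇒ Q`, activations `P → X` and inhibitions `P ⊣ X`. -/
inductive Link (α : Type) : Type where
  | prodP : Finset α → Finset α → Link α
  | prodC : Finset α → Finset α → Link α
  | act   : Finset α → Link α → Link α
  | inh   : Finset α → Link α → Link α
  deriving DecidableEq

namespace Link
variable {α : Type}

/-- The source (left-hand side) set of atoms of a link. -/
def src : Link α → Finset α
  | prodP P _ => P
  | prodC P _ => P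
  | act P _ => P
  | inh P _ => P

/-- The number of arrows occurring in a link, minus one (productions have size 0). -/
def size : Link α → ℕ
  | prodP _ _ => 0
  | prodC _ _ => 0
  | act _ X => X.size + 1
  | inh _ X => X.size + 1

/-- The produced atoms of a production (empty for regulations). -/
def prodTgt : Link α → Finset α
  | prodP _ Q => Q
  | prodC _ Q => Q
  | _ => ∅

/-- The consumed atoms of a consuming production (empty otherwise). -/
def consSrc : Link α → Finset α
  | prodC P _ => P
  | _ => ∅

end Link

variable {α : Type} [DecidableEq α]

/-- `γ_a(X)`: the activations in `A` whose target is `X`. -/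
def gammaA (A : Finset (Link α)) (X : Link α) : Finset (Link α) :=
  A.filter (fun Y => Y = Link.act Y.src X)

/-- `γ_i(X)`: the inhibitions in `I` whose target is `X`. -/
def gammaI (I : Finset (Link α)) (X : Link α) : Finset (Link α) :=
  I.filter (fun Y => Y = Link.inh Y.src X)

/-- Fuelled version of the mutually recursive definition of a link being active in `D`. -/
def ActiveAux (A I : Finset (Link α)) (D : Set α) : ℕ → Link α → Prop
  | 0, X => ↑X.src ⊆ D
  | m+1, X => ↑X.src ⊆ D ∧ (∀ Y ∈ gammaA A X, ActiveAux A I D m Y)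
      ∧ (∀ Y ∈ gammaI I X, ¬ ActiveAux A I D m Y)

/-- A Molecular Interaction Graph. -/
structure MIG (α : Type) [DecidableEq α] where
  At : Finset α
  Ex : Finset α
  Ed : Finset α
  hdisj : Disjoint Ex Ed
  hunion : Ex ∪ Ed = At
  Bpos : Finset α
  Bneg : Finset α
  hBpos : Bpos ⊆ At
  hBneg : Bneg ⊆ At
  P : Finset (Link α)
  C : Finset (Link α)
  A : Finset (Link α)
  I : Finset (Link α)
  hP : ∀ X ∈ P, ∃ p q : Finset α, X = Link.prodP p q ∧ p ⊆ At ∧ q ⊆ At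
  hC : ∀ X ∈ C, ∃ p q : Finset α, X = Link.prodC p q ∧ p ⊆ At ∧ q ⊆ At
  n : ℕ
  Afam : ℕ → Finset (Link α)
  Ifam : ℕ → Finset (Link α)
  hA : A = (Finset.range (n+1)).biUnion Afam
  hI : I = (Finset.range (n+1)).biUnion Ifam
  hA0 : ∀ X ∈ Afam 0, ∃ p Y, X = Link.act p Y ∧ p ⊆ At ∧ Y ∈ P ∪ C
  hI0 : ∀ X ∈ Ifam 0, ∃ p Y, X = Link.inh p Y ∧ p ⊆ At ∧ Y ∈ P ∪ C
  hAs : ∀ i, ∀ X ∈ Afam (i+1), ∃ p Y, X = Link.act p Y ∧ p ⊆ At ∧ Y ∈ Afam i ∪ Ifam i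
  hIs : ∀ i, ∀ X ∈ Ifam (i+1), ∃ p Y, X = Link.inh p Y ∧ p ⊆ At ∧ Y ∈ Afam i ∪ Ifam i

namespace MIG
variable (G : MIG α)

/-- Fuel sufficient for the recursion on regulations to be exact. -/
def maxFuel : ℕ := (G.A ∪ G.I).sup Link.size + 1

/-- All links of the MIG. -/
def Links : Finset (Link α) := G.P ∪ G.C ∪ G.A ∪ G.I

/-- A link is active in `D`. -/
def Active (D : Set α) (X : Link α) : Prop := ActiveAux G.A G.I D G.maxFuel X

/-- A link is inhibited in `D` iff it is not active in `D`. -/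
def Inhibited (D : Set α) (X : Link α) : Prop := ¬ G.Active D X

/-- Atom `p` is produced in `D`. -/
def Produced (D : Set α) (p : α) : Prop :=
  p ∈ G.Ed ∧ ∃ X ∈ G.P ∪ G.C, p ∈ X.prodTgt ∧ G.Active D X

/-- Atom `p` is consumed in `D`. -/
def Consumed (D : Set α) (p : α) : Prop :=
  p ∈ G.Ed ∧ ∃ X ∈ G.C, p ∈ X.consSrc ∧ G.Active D X

/-- `T` is a trace for the MIG `G`. -/
def IsTrace (T : ℕ → Set α) : Prop :=
  (∀ k, T k ⊆ ↑G.At) ∧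
  (∀ p ∈ G.Bpos, p ∈ T 0) ∧ (∀ p ∈ G.Bneg, p ∉ T 0) ∧
  (∀ k, ∀ p ∈ G.Ex, (p ∈ T (k+1) ↔ p ∈ T k)) ∧
  (∀ k, ∀ p ∈ G.Ed,
    (p ∈ T (k+1) ↔ G.Produced (T k) p ∨ (p ∈ T k ∧ ¬ G.Consumed (T k) p)))

end MIG

/-- LTL formulae (with classical connectives and the unary future operators). -/
inductive LTL (α : Type) : Type where
  | bot : LTL α
  | atom : α → LTL α
  | neg : LTL α → LTL α
  | or : LTL α → LTL α → LTL α
  | and : LTL α → LTL α → LTL α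
  | iff : LTL α → LTL α → LTL α
  | next : LTL α → LTL α
  | always : LTL α → LTL α
  deriving DecidableEq

namespace LTL
variable {β : Type}

/-- LTL satisfaction at position `k` of the interpretation `T`. -/
def Sat (T : ℕ → Set β) : ℕ → LTL β → Prop
  | _, bot => False
  | k, atom p => p ∈ T k
  | k, neg φ => ¬ Sat T k φ
  | k, or φ ψ => Sat T k φ ∨ Sat T k ψ
  | k, and φ ψ => Sat T k φ ∧ Sat T k ψ
  | k, iff φ ψ => (Sat T k φ ↔ Sat T k ψ)
  | k, next φ => Sat T (k+1) φ
  | k, always φ => ∀ j, k ≤ j → Sat T j φ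
  termination_by _ φ => φ

/-- Classical (propositional) satisfaction by a valuation `M`
(temporal operators are evaluated vacuously). -/
def PSat (M : Set β) : LTL β → Prop
  | bot => False
  | atom p => p ∈ M
  | neg φ => ¬ PSat M φ
  | or φ ψ => PSat M φ ∨ PSat M ψ
  | and φ ψ => PSat M φ ∧ PSat M ψ
  | iff φ ψ => (PSat M φ ↔ PSat M ψ)
  | next φ => PSat M φ
  | always φ => PSat M φ

/-- A formula is classical iff it contains no temporal operator. -/
def Classical : LTL β → Prop
  | bot => True
  | atom _ => True
  | neg φ => Classical φ
  | or φ ψ => Classical φ ∧ Classical ψ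
  | and φ ψ => Classical φ ∧ Classical ψ
  | iff φ ψ => Classical φ ∧ Classical ψ
  | next _ => False
  | always _ => False

/-- The number of logical operators of a formula. -/
def size : LTL β → ℕ
  | bot => 0
  | atom _ => 0
  | neg φ => size φ + 1
  | or φ ψ => size φ + size ψ + 1
  | and φ ψ => size φ + size ψ + 1
  | iff φ ψ => size φ + size ψ + 1
  | next φ => size φ + 1
  | always φ => size φ + 1

/-- The atoms occurring in a formula. -/
def atoms [DecidableEq β] : LTL β → Finset β
  | bot => ∅
  | atom p => {p}
  | neg φ => atoms φ
  | or φ ψ => atoms φ ∪ atoms ψ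
  | and φ ψ => atoms φ ∪ atoms ψ
  | iff φ ψ => atoms φ ∪ atoms ψ
  | next φ => atoms φ
  | always φ => atoms φ

end LTL

/-- Conjunction of a list of formulae. -/
def bigAnd {β : Type} : List (LTL β) → LTL β
  | [] => LTL.neg LTL.bot
  | φ :: l => LTL.and φ (bigAnd l)

/-- Disjunction of a list of formulae. -/
def bigOr {β : Type} : List (LTL β) → LTL β
  | [] => LTL.bot
  | φ :: l => LTL.or φ (bigOr l)

/-- Fuelled construction of the classical formula `A(X)` characterising activeness. -/
noncomputable def formAux (A I : Finset (Link α)) : ℕ → Link α → LTL α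
  | 0, X => bigAnd (X.src.toList.map LTL.atom)
  | m+1, X =>
      LTL.and (bigAnd (X.src.toList.map LTL.atom))
        (LTL.and (bigAnd ((gammaA A X).toList.map (fun Y => formAux A I m Y)))
          (bigAnd ((gammaI I X).toList.map (fun Y => LTL.neg (formAux A I m Y)))))

namespace MIG
variable (G : MIG α)

/-- The classical formula `A(X)`. -/
noncomputable def formA (X : Link α) : LTL α := formAux G.A G.I G.maxFuel X

/-- The productions having `p` in their right-hand side. -/
def prodsFor (p : α) : Finset (Link α) := (G.P ∪ G.C).filter (fun X => p ∈ X.prodTgt)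

/-- The consuming productions having `p` in their left-hand side. -/
def consFor (p : α) : Finset (Link α) := G.C.filter (fun X => p ∈ X.consSrc)

/-- The classical formula `Pr(p)` characterising production of `p`. -/
noncomputable def Pr (p : α) : LTL α :=
  if p ∈ G.Ex then LTL.bot else bigOr ((G.prodsFor p).toList.map G.formA)

/-- The classical formula `Cn(p)` characterising consumption of `p`. -/
noncomputable def Cn (p : α) : LTL α :=
  if p ∈ G.Ex then LTL.bot else bigOr ((G.consFor p).toList.map G.formA)

/-- The successor state axiom `□(○p ↔ Pr(p) ∨ (p ∧ ¬Cn(p)))`. -/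
noncomputable def SSA (p : α) : LTL α :=
  LTL.always (LTL.iff (LTL.next (LTL.atom p))
    (LTL.or (G.Pr p) (LTL.and (LTL.atom p) (LTL.neg (G.Cn p)))))

/-- The LTL encoding of a MIG: the literals of `ℬ` and the SSA of each atom. -/
noncomputable def encoding : Finset (LTL α) :=
  G.Bpos.image LTL.atom ∪ G.Bneg.image (fun p => LTL.neg (LTL.atom p)) ∪ G.At.image G.SSA

end MIG

/-- Grounding of a classical formula to time `k`: exogenous atoms are kept,
an endogenous atom `p` becomes the fresh atom `p_k`. -/
def ground (Ex : Finset α) (k : ℕ) : LTL α → LTL (α ⊕ α × ℕ)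
  | LTL.bot => LTL.bot
  | LTL.atom p => if p ∈ Ex then LTL.atom (Sum.inl p) else LTL.atom (Sum.inr (p, k))
  | LTL.neg φ => LTL.neg (ground Ex k φ)
  | LTL.or φ ψ => LTL.or (ground Ex k φ) (ground Ex k ψ)
  | LTL.and φ ψ => LTL.and (ground Ex k φ) (ground Ex k ψ)
  | LTL.iff φ ψ => LTL.iff (ground Ex k φ) (ground Ex k ψ)
  | LTL.next φ => LTL.next (ground Ex k φ)
  | LTL.always φ => LTL.always (ground Ex k φ)

namespace MIG
variable (G : MIG α)

/-- The grounding `⟦SSA_p⟧_k = (p_{k+1} ↔ ⟦Pr(p) ∨ (p ∧ ¬Cn(p))⟧_k)`. -/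
noncomputable def groundSSA (p : α) (k : ℕ) : LTL (α ⊕ α × ℕ) :=
  LTL.iff (LTL.atom (Sum.inr (p, k+1)))
    (ground G.Ex k (LTL.or (G.Pr p) (LTL.and (LTL.atom p) (LTL.neg (G.Cn p)))))

/-- The grounding of the LTL encoding up to time `n`. -/
noncomputable def groundEnc (n : ℕ) : Finset (LTL (α ⊕ α × ℕ)) :=
  (G.Bpos.image fun p => ground G.Ex 0 (LTL.atom p)) ∪
  (G.Bneg.image fun p => ground G.Ex 0 (LTL.neg (LTL.atom p))) ∪
  ((G.Ed ×ˢ Finset.range n).image fun q => G.groundSSA q.1 q.2)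

end MIG

lemma sat_bigAnd {β : Type} (T : ℕ → Set β) (k : ℕ) (l : List (LTL β)) :
    LTL.Sat T k (bigAnd l) ↔ ∀ φ ∈ l, LTL.Sat T k φ := by
  induction l with
  | nil => simp [bigAnd, LTL.Sat]
  | cons φ l ih => simp [bigAnd, LTL.Sat, ih]

lemma sat_bigOr {β : Type} (T : ℕ → Set β) (k : ℕ) (l : List (LTL β)) :
    LTL.Sat T k (bigOr l) ↔ ∃ φ ∈ l, LTL.Sat T k φ := by
  induction l with
  | nil => simp [bigOr, LTL.Sat]
  | cons φ l ih => simp [bigOr, LTL.Sat, ih]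

lemma sat_formAux {α : Type} [DecidableEq α] (A I : Finset (Link α))
    (T : ℕ → Set α) (k : ℕ) :
    ∀ m (X : Link α), LTL.Sat T k (formAux A I m X) ↔ ActiveAux A I (T k) m X := by
  intro m
  induction m with
  | zero =>
    intro X
    simp only [formAux, ActiveAux, sat_bigAnd]
    constructor
    · intro h p hp
      have := h (LTL.atom p) (by simp [Finset.mem_coe.mp hp])
      simpa [LTL.Sat] using this
    · intro h φ hφ
      simp only [List.mem_map, Finset.mem_toList] at hφ
      obtain ⟨p, hp, rfl⟩ := hφ
      simpa [LTL.Sat] using h (Finset.mem_coe.mpr hp)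
  | succ m ih =>
    intro X
    simp only [formAux, ActiveAux, LTL.Sat, sat_bigAnd]
    constructor
    · rintro ⟨h1, h2, h3⟩
      refine ⟨?_, ?_, ?_⟩
      · intro p hp
        have := h1 (LTL.atom p) (by simp [Finset.mem_coe.mp hp])
        simpa [LTL.Sat] using this
      · intro Y hY
        exact (ih Y).mp (h2 _ (by simp only [List.mem_map, Finset.mem_toList]; exact ⟨Y, hY, rfl⟩))
      · intro Y hY hact
        have := h3 (LTL.neg (formAux A I m Y))
          (by simp only [List.mem_map, Finset.mem_toList]; exact ⟨Y, hY, rfl⟩)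
        rw [show (formAux A I m Y).neg = LTL.neg (formAux A I m Y) from rfl, LTL.Sat] at this
        exact this ((ih Y).mpr hact)
    · rintro ⟨h1, h2, h3⟩
      refine ⟨?_, ?_, ?_⟩
      · intro φ hφ
        simp only [List.mem_map, Finset.mem_toList] at hφ
        obtain ⟨p, hp, rfl⟩ := hφ
        simpa [LTL.Sat] using h1 (Finset.mem_coe.mpr hp)
      · intro φ hφ
        simp only [List.mem_map, Finset.mem_toList] at hφ
        obtain ⟨Y, hY, rfl⟩ := hφ
        exact (ih Y).mpr (h2 Y hY)
      · intro φ hφ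
        simp only [List.mem_map, Finset.mem_toList] at hφ
        obtain ⟨Y, hY, rfl⟩ := hφ
        rw [show (formAux A I m Y).neg = LTL.neg (formAux A I m Y) from rfl, LTL.Sat]
        intro hs
        exact h3 Y hY ((ih Y).mp hs)

lemma sat_formA {α : Type} [DecidableEq α] (G : MIG α) (T : ℕ → Set α) (k : ℕ)
    (X : Link α) : LTL.Sat T k (G.formA X) ↔ G.Active (T k) X :=
  sat_formAux G.A G.I T k G.maxFuel X

lemma sat_Pr {α : Type} [DecidableEq α] (G : MIG α) (T : ℕ → Set α) (k : ℕ)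
    (p : α) (hp : p ∈ G.Ed) : LTL.Sat T k (G.Pr p) ↔ G.Produced (T k) p := by
  have hpEx : p ∉ G.Ex := fun h => G.hdisj.forall_ne_finset h hp rfl
  simp only [MIG.Pr, if_neg hpEx, sat_bigOr]
  constructor
  · rintro ⟨φ, hφ, hs⟩
    simp only [List.mem_map, Finset.mem_toList, MIG.prodsFor, Finset.mem_filter] at hφ
    obtain ⟨X, ⟨hX1, hX2⟩, rfl⟩ := hφ
    exact ⟨hp, X, hX1, hX2, (sat_formA G T k X).mp hs⟩
  · rintro ⟨_, X, hX1, hX2, hact⟩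
    refine ⟨G.formA X, ?_, (sat_formA G T k X).mpr hact⟩
    simp only [List.mem_map, Finset.mem_toList, MIG.prodsFor, Finset.mem_filter]
    exact ⟨X, ⟨hX1, hX2⟩, rfl⟩

lemma sat_Cn {α : Type} [DecidableEq α] (G : MIG α) (T : ℕ → Set α) (k : ℕ)
    (p : α) (hp : p ∈ G.Ed) : LTL.Sat T k (G.Cn p) ↔ G.Consumed (T k) p := by
  have hpEx : p ∉ G.Ex := fun h => G.hdisj.forall_ne_finset h hp rfl
  simp only [MIG.Cn, if_neg hpEx, sat_bigOr]
  constructor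
  · rintro ⟨φ, hφ, hs⟩
    simp only [List.mem_map, Finset.mem_toList, MIG.consFor, Finset.mem_filter] at hφ
    obtain ⟨X, ⟨hX1, hX2⟩, rfl⟩ := hφ
    exact ⟨hp, X, hX1, hX2, (sat_formA G T k X).mp hs⟩
  · rintro ⟨_, X, hX1, hX2, hact⟩
    refine ⟨G.formA X, ?_, (sat_formA G T k X).mpr hact⟩
    simp only [List.mem_map, Finset.mem_toList, MIG.consFor, Finset.mem_filter]
    exact ⟨X, ⟨hX1, hX2⟩, rfl⟩

/-- every model (over the atoms of `G`) of the LTL encoding of a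
MIG `G` is a trace for `G`. -/
theorem model_of_encoding_is_trace {α : Type} [DecidableEq α]
    (G : MIG α) (T : ℕ → Set α) (hAt : ∀ k, T k ⊆ ↑G.At)
    (hmod : ∀ φ ∈ G.encoding, LTL.Sat T 0 φ) :
    G.IsTrace T := by
  have hSSA : ∀ p ∈ G.At, ∀ k,
      (p ∈ T (k+1) ↔ LTL.Sat T k (G.Pr p) ∨ (p ∈ T k ∧ ¬ LTL.Sat T k (G.Cn p))) := by
    intro p hp k
    have hm := hmod (G.SSA p) (by
      simp only [MIG.encoding, Finset.mem_union, Finset.mem_image]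
      exact Or.inr ⟨p, hp, rfl⟩)
    rw [MIG.SSA, LTL.Sat] at hm
    have := hm k (Nat.zero_le k)
    simpa [LTL.Sat] using this
  refine ⟨hAt, ?_, ?_, ?_, ?_⟩
  · intro p hp
    have := hmod (LTL.atom p) (by
      simp only [MIG.encoding, Finset.mem_union, Finset.mem_image]
      exact Or.inl (Or.inl ⟨p, hp, rfl⟩))
    simpa [LTL.Sat] using this
  · intro p hp
    have := hmod (LTL.neg (LTL.atom p)) (by
      simp only [MIG.encoding, Finset.mem_union, Finset.mem_image]
      exact Or.inl (Or.inr ⟨p, hp, rfl⟩))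
    simpa [LTL.Sat] using this
  · intro k p hp
    have hpAt : p ∈ G.At := G.hunion ▸ Finset.mem_union_left _ hp
    have h := hSSA p hpAt k
    simp only [MIG.Pr, MIG.Cn, if_pos hp, LTL.Sat] at h
    tauto
  · intro k p hp
    have hpAt : p ∈ G.At := G.hunion ▸ Finset.mem_union_right _ hp
    rw [hSSA p hpAt k, sat_Pr G T k p hp, sat_Cn G T k p hp]
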